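/- arXiv:1508.06445 — 2 statements merged into one kernel-verified Lean document; each statement's English description precedes it below -/
import Mathlib

section
/- Let K be a triangle with counterclockwise vertices z_r, z_s, z_t, barycentric coordinates λ_r, λ_s, λ_t, and let E_ℓ be the edge from z_s to z_t with unit normal n_{E_ℓ} = (y_t−y_s, x_s−x_t)/|E_ℓ|. Define φ_{ℓ,1} = λ_s ∇^⊥ λ_t and φ_{ℓ,2} = −λ_t ∇^⊥ λ_s on K. Then on E_ℓ, φ_{ℓ,1}·n_{E_ℓ} = λ_s/|E_ℓ| and φ_{ℓ,2}·n_{E_ℓ} = λ_t/|E_ℓ|, while on each of the other two edges of K the normal components of φ_{ℓ,1} and φ_{ℓ,2} vanish identically. -/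
/-!
For an affine `λ` with gradient `(a, b)`, the rotated gradient `∇^⊥ λ = (b, -a)` is tangent to
the level lines of `λ`. Hence `∇^⊥ λ_t` has no normal component on `[z_r, z_s]`, where `λ_t`
vanishes, while on `E_ℓ` its component along `n_{E_ℓ}` is the tangential derivative
`(λ_t(z_t) - λ_t(z_s)) / |E_ℓ| = 1 / |E_ℓ|`. On the remaining edge `[z_t, z_r]` the factor
`λ_s` vanishes. The same argument with `s` and `t` exchanged handles `φ_{ℓ,2}`.
-/

section AffineFunction

variable {f : ℝ × ℝ → ℝ} {a b c : ℝ}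

lemma smul_dot (s : ℝ) (v n : ℝ × ℝ) :
    (s • v).1 * n.1 + (s • v).2 * n.2 = s * (v.1 * n.1 + v.2 * n.2) := by
  simp only [Prod.smul_fst, Prod.smul_snd, smul_eq_mul]
  ring

lemma affine_grad_dot_sub (hf : ∀ p, f p = a * p.1 + b * p.2 + c) (x y : ℝ × ℝ) :
    a * (y.1 - x.1) + b * (y.2 - x.2) = f y - f x := by
  rw [hf, hf]
  ring

lemma affine_eq_zero_of_mem_segment (hf : ∀ p, f p = a * p.1 + b * p.2 + c)
    {x y : ℝ × ℝ} (hx : f x = 0) (hy : f y = 0) {p : ℝ × ℝ} (hp : p ∈ segment ℝ x y) :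
    f p = 0 := by
  obtain ⟨u, v, -, -, huv, rfl⟩ := hp
  rw [hf] at hx hy ⊢
  simp only [Prod.fst_add, Prod.snd_add, Prod.smul_fst, Prod.smul_snd, smul_eq_mul]
  linear_combination u * hx + v * hy - c * huv

lemma rotGrad_dot_edgeNormal (hf : ∀ p, f p = a * p.1 + b * p.2 + c) (x y : ℝ × ℝ) (L : ℝ) :
    ((b, -a) : ℝ × ℝ).1 * ((1 / L) • ((y.2 - x.2, x.1 - y.1) : ℝ × ℝ)).1
      + ((b, -a) : ℝ × ℝ).2 * ((1 / L) • ((y.2 - x.2, x.1 - y.1) : ℝ × ℝ)).2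
      = (f y - f x) / L := by
  rw [← affine_grad_dot_sub hf]
  simp only [Prod.smul_fst, Prod.smul_snd, smul_eq_mul]
  ring

lemma rotGrad_dot_normal_eq_zero_of_eq (hf : ∀ p, f p = a * p.1 + b * p.2 + c)
    {x y n : ℝ × ℝ} (hxy : x ≠ y) (hfxy : f x = f y)
    (hn : n.1 * (y.1 - x.1) + n.2 * (y.2 - x.2) = 0) :
    ((b, -a) : ℝ × ℝ).1 * n.1 + ((b, -a) : ℝ × ℝ).2 * n.2 = 0 := by
  have hg : a * (y.1 - x.1) + b * (y.2 - x.2) = 0 := by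
    rw [affine_grad_dot_sub hf, hfxy, sub_self]
  simp only [neg_mul, ← sub_eq_add_neg]
  by_contra hne
  refine hxy (Prod.ext ?_ ?_)
  · have h : (b * n.1 - a * n.2) * (y.1 - x.1) = 0 := by
      linear_combination b * hn - n.2 * hg
    linarith [(mul_eq_zero.1 h).resolve_left hne]
  · have h : (b * n.1 - a * n.2) * (y.2 - x.2) = 0 := by
      linear_combination n.1 * hg - a * hn
    linarith [(mul_eq_zero.1 h).resolve_left hne]

end AffineFunction

theorem bdm_basis_normal_components_general
    (z : Fin 3 → ℝ × ℝ)
    (a b c : Fin 3 → ℝ)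
    (lam : Fin 3 → ℝ × ℝ → ℝ)
    (hlam : ∀ i p, lam i p = a i * p.1 + b i * p.2 + c i)
    (hinterp : ∀ i j, lam i (z j) = if i = j then 1 else 0)
    (phi1 phi2 : ℝ × ℝ → ℝ × ℝ)
    (hphi1 : ∀ p, phi1 p = lam 1 p • ((b 2, -(a 2)) : ℝ × ℝ))
    (hphi2 : ∀ p, phi2 p = -(lam 2 p) • ((b 1, -(a 1)) : ℝ × ℝ))
    (lenE : ℝ)
    (nE : ℝ × ℝ)
    (hn : nE = (1 / lenE) • (((z 2).2 - (z 1).2, (z 1).1 - (z 2).1) : ℝ × ℝ))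
    (nErs nEtr : ℝ × ℝ)
    (hnrsperp : nErs.1 * ((z 1).1 - (z 0).1) + nErs.2 * ((z 1).2 - (z 0).2) = 0)
    (hntrperp : nEtr.1 * ((z 0).1 - (z 2).1) + nEtr.2 * ((z 0).2 - (z 2).2) = 0) :
    (∀ p ∈ segment ℝ (z 1) (z 2),
        (phi1 p).1 * nE.1 + (phi1 p).2 * nE.2 = lam 1 p / lenE ∧
        (phi2 p).1 * nE.1 + (phi2 p).2 * nE.2 = lam 2 p / lenE) ∧
    (∀ p ∈ segment ℝ (z 0) (z 1),
        (phi1 p).1 * nErs.1 + (phi1 p).2 * nErs.2 = 0 ∧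
        (phi2 p).1 * nErs.1 + (phi2 p).2 * nErs.2 = 0) ∧
    (∀ p ∈ segment ℝ (z 2) (z 0),
        (phi1 p).1 * nEtr.1 + (phi1 p).2 * nEtr.2 = 0 ∧
        (phi2 p).1 * nEtr.1 + (phi2 p).2 * nEtr.2 = 0) := by
  have l10 : lam 1 (z 0) = 0 := by simp [hinterp]
  have l11 : lam 1 (z 1) = 1 := by simp [hinterp]
  have l12 : lam 1 (z 2) = 0 := by simp [hinterp]
  have l20 : lam 2 (z 0) = 0 := by simp [hinterp]
  have l21 : lam 2 (z 1) = 0 := by simp [hinterp]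
  have l22 : lam 2 (z 2) = 1 := by simp [hinterp]
  have h01 : z 0 ≠ z 1 := fun h => by simp [h, l11] at l10
  have h20 : z 2 ≠ z 0 := fun h => by simp [h, l20] at l22
  refine ⟨fun p _ => ⟨?_, ?_⟩, fun p hp => ⟨?_, ?_⟩, fun p hp => ⟨?_, ?_⟩⟩
  · rw [hphi1, smul_dot, hn, rotGrad_dot_edgeNormal (hlam 2), l22, l21]
    ring
  · rw [hphi2, smul_dot, hn, rotGrad_dot_edgeNormal (hlam 1), l12, l11]
    ring
  · rw [hphi1, smul_dot,
      rotGrad_dot_normal_eq_zero_of_eq (hlam 2) h01 (l20.trans l21.symm) hnrsperp, mul_zero]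
  · rw [hphi2, smul_dot, affine_eq_zero_of_mem_segment (hlam 2) l20 l21 hp, neg_zero, zero_mul]
  · rw [hphi1, smul_dot, affine_eq_zero_of_mem_segment (hlam 1) l12 l10 hp, zero_mul]
  · rw [hphi2, smul_dot,
      rotGrad_dot_normal_eq_zero_of_eq (hlam 1) h20 (l12.trans l10.symm) hntrperp, mul_zero]

/-- Normal components of the BDM1 edge basis functions
φ_{ℓ,1} = λ_s ∇^⊥ λ_t and φ_{ℓ,2} = -λ_t ∇^⊥ λ_s on the three edges of
a triangle with counterclockwise vertices z_r = z 0, z_s = z 1, z_t = z 2.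
On E_ℓ = [z_s, z_t]: λ_s/|E_ℓ| resp. λ_t/|E_ℓ|; on the other two edges they
vanish identically. -/
theorem bdm_basis_normal_components
    (z : Fin 3 → ℝ × ℝ)
    (areaK : ℝ)
    (harea : areaK = (((z 1).1 - (z 0).1) * ((z 2).2 - (z 0).2)
        - ((z 2).1 - (z 0).1) * ((z 1).2 - (z 0).2)) / 2)
    (hccw : 0 < areaK)
    (a b c : Fin 3 → ℝ)
    (lam : Fin 3 → ℝ × ℝ → ℝ)
    (hlam : ∀ i p, lam i p = a i * p.1 + b i * p.2 + c i)
    (hinterp : ∀ i j, lam i (z j) = if i = j then 1 else 0)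
    (phi1 phi2 : ℝ × ℝ → ℝ × ℝ)
    (hphi1 : ∀ p, phi1 p = lam 1 p • ((b 2, -(a 2)) : ℝ × ℝ))
    (hphi2 : ∀ p, phi2 p = -(lam 2 p) • ((b 1, -(a 1)) : ℝ × ℝ))
    (lenE : ℝ) (hlen : lenE = ‖z 2 - z 1‖)
    (nE : ℝ × ℝ)
    (hn : nE = (1 / lenE) • (((z 2).2 - (z 1).2, (z 1).1 - (z 2).1) : ℝ × ℝ))
    (nErs nEtr : ℝ × ℝ) (hnrs : ‖nErs‖ = 1) (hntr : ‖nEtr‖ = 1)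
    (hnrsperp : nErs.1 * ((z 1).1 - (z 0).1) + nErs.2 * ((z 1).2 - (z 0).2) = 0)
    (hntrperp : nEtr.1 * ((z 0).1 - (z 2).1) + nEtr.2 * ((z 0).2 - (z 2).2) = 0) :
    (∀ p ∈ segment ℝ (z 1) (z 2),
        (phi1 p).1 * nE.1 + (phi1 p).2 * nE.2 = lam 1 p / lenE ∧
        (phi2 p).1 * nE.1 + (phi2 p).2 * nE.2 = lam 2 p / lenE) ∧
    (∀ p ∈ segment ℝ (z 0) (z 1),
        (phi1 p).1 * nErs.1 + (phi1 p).2 * nErs.2 = 0 ∧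
        (phi2 p).1 * nErs.1 + (phi2 p).2 * nErs.2 = 0) ∧
    (∀ p ∈ segment ℝ (z 2) (z 0),
        (phi1 p).1 * nEtr.1 + (phi1 p).2 * nEtr.2 = 0 ∧
        (phi2 p).1 * nEtr.1 + (phi2 p).2 * nEtr.2 = 0) :=
  bdm_basis_normal_components_general z a b c lam hlam hinterp phi1 phi2 hphi1 hphi2 lenE nE hn nErs
    nEtr hnrsperp hntrperp
end

section
/- Let E_ℓ be an interior edge from z_s to z_t shared by triangles K⁻ and K⁺ as above, with φ_{ℓ,1}, φ_{ℓ,2} defined piecewise on K⁻ ∪ K⁺ by φ_{ℓ,1} = λ_s ∇^⊥ λ_t, φ_{ℓ,2} = −λ_t ∇^⊥ λ_s (barycentric coordinates of the respective triangle), and extended by zero elsewhere. Then the normal component of φ_{ℓ,k} (k = 1, 2) across the edge E_ℓ is the same from both sides: the trace of φ_{ℓ,1}·n_{E_ℓ} from K⁻ equals the trace from K⁺, both equal to λ_s/|E_ℓ|, and similarly for φ_{ℓ,2} with λ_t/|E_ℓ|. -/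
/-!
Along the edge both barycentric functions `λ_s` (and both `λ_t`) are affine and take the
same values `1, 0` (resp. `0, 1`) at the endpoints, so they coincide on the whole edge.
For an affine `f = a x + b y + c`, the rotated gradient `∇^⊥ f = (b, -a)` paired with the
unnormalised normal `(t₂ - s₂, s₁ - t₁)` is the tangential increment `f z_t - f z_s`,
which is `±1` for `λ_t` and `λ_s`.
-/

section AffineOnPlane

variable {f g : ℝ × ℝ → ℝ} {a b c a' b' c' : ℝ}

lemma affine_apply_add_smul (hf : ∀ p, f p = a * p.1 + b * p.2 + c) {s t : ℝ}
    (hst : s + t = 1) (x y : ℝ × ℝ) : f (s • x + t • y) = s * f x + t * f y := by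
  simp only [hf, Prod.fst_add, Prod.snd_add, Prod.smul_fst, Prod.smul_snd, smul_eq_mul]
  linear_combination (-c) * hst

lemma eqOn_segment_of_affine (hf : ∀ p, f p = a * p.1 + b * p.2 + c)
    (hg : ∀ p, g p = a' * p.1 + b' * p.2 + c') {x y : ℝ × ℝ}
    (hx : f x = g x) (hy : f y = g y) : Set.EqOn f g (segment ℝ x y) := by
  rintro p ⟨s, t, -, -, hst, rfl⟩
  rw [affine_apply_add_smul hf hst, affine_apply_add_smul hg hst, hx, hy]

lemma smul_rotGrad_dot_edgeNormal (hf : ∀ p, f p = a * p.1 + b * p.2 + c)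
    (μ len : ℝ) (x y : ℝ × ℝ) :
    (μ • ((b, -a) : ℝ × ℝ)).1 * ((1 / len) • ((y.2 - x.2, x.1 - y.1) : ℝ × ℝ)).1
      + (μ • ((b, -a) : ℝ × ℝ)).2 * ((1 / len) • ((y.2 - x.2, x.1 - y.1) : ℝ × ℝ)).2
      = μ * (f y - f x) / len := by
  simp only [hf, Prod.smul_fst, Prod.smul_snd, smul_eq_mul]
  ring

end AffineOnPlane

theorem bdm_normal_trace_continuity_general
    (zrm zrp zs zt : ℝ × ℝ)
    (am bm cm : Fin 3 → ℝ) (lamM : Fin 3 → ℝ × ℝ → ℝ)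
    (hlamM : ∀ i p, lamM i p = am i * p.1 + bm i * p.2 + cm i)
    (hinterpM : ∀ i j, lamM i (![zrm, zs, zt] j) = if i = j then 1 else 0)
    (ap bp cp : Fin 3 → ℝ) (lamP : Fin 3 → ℝ × ℝ → ℝ)
    (hlamP : ∀ i p, lamP i p = ap i * p.1 + bp i * p.2 + cp i)
    (hinterpP : ∀ i j, lamP i (![zrp, zt, zs] j) = if i = j then 1 else 0)
    (phi1M phi2M phi1P phi2P : ℝ × ℝ → ℝ × ℝ)
    (hphi1M : ∀ p, phi1M p = lamM 1 p • ((bm 2, -(am 2)) : ℝ × ℝ))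
    (hphi2M : ∀ p, phi2M p = -(lamM 2 p) • ((bm 1, -(am 1)) : ℝ × ℝ))
    (hphi1P : ∀ p, phi1P p = lamP 2 p • ((bp 1, -(ap 1)) : ℝ × ℝ))
    (hphi2P : ∀ p, phi2P p = -(lamP 1 p) • ((bp 2, -(ap 2)) : ℝ × ℝ))
    (lenE : ℝ)
    (nE : ℝ × ℝ)
    (hn : nE = (1 / lenE) • ((zt.2 - zs.2, zs.1 - zt.1) : ℝ × ℝ)) :
    ∀ p ∈ segment ℝ zs zt,
      -- the barycentric traces agree on the edge
      lamM 1 p = lamP 2 p ∧ lamM 2 p = lamP 1 p ∧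
      -- traces of the normal component of φ_{ℓ,1} from both sides
      (phi1M p).1 * nE.1 + (phi1M p).2 * nE.2 = lamM 1 p / lenE ∧
      (phi1P p).1 * nE.1 + (phi1P p).2 * nE.2 = lamM 1 p / lenE ∧
      -- traces of the normal component of φ_{ℓ,2} from both sides
      (phi2M p).1 * nE.1 + (phi2M p).2 * nE.2 = lamM 2 p / lenE ∧
      (phi2P p).1 * nE.1 + (phi2P p).2 * nE.2 = lamM 2 p / lenE := by
  intro p hp
  have hM1s : lamM 1 zs = 1 := by simpa using hinterpM 1 1
  have hM1t : lamM 1 zt = 0 := by simpa using hinterpM 1 2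
  have hM2s : lamM 2 zs = 0 := by simpa using hinterpM 2 1
  have hM2t : lamM 2 zt = 1 := by simpa using hinterpM 2 2
  have hP1t : lamP 1 zt = 1 := by simpa using hinterpP 1 1
  have hP1s : lamP 1 zs = 0 := by simpa using hinterpP 1 2
  have hP2t : lamP 2 zt = 0 := by simpa using hinterpP 2 1
  have hP2s : lamP 2 zs = 1 := by simpa using hinterpP 2 2
  have hEdgeS : lamM 1 p = lamP 2 p :=
    eqOn_segment_of_affine (hlamM 1) (hlamP 2) (hM1s.trans hP2s.symm)
      (hM1t.trans hP2t.symm) hp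
  have hEdgeT : lamM 2 p = lamP 1 p :=
    eqOn_segment_of_affine (hlamM 2) (hlamP 1) (hM2s.trans hP1s.symm)
      (hM2t.trans hP1t.symm) hp
  subst hn
  refine ⟨hEdgeS, hEdgeT, ?_, ?_, ?_, ?_⟩
  · rw [hphi1M, smul_rotGrad_dot_edgeNormal (hlamM 2), hM2t, hM2s]; ring
  · rw [hphi1P, smul_rotGrad_dot_edgeNormal (hlamP 1), hP1t, hP1s, hEdgeS]; ring
  · rw [hphi2M, smul_rotGrad_dot_edgeNormal (hlamM 1), hM1t, hM1s]; ring
  · rw [hphi2P, smul_rotGrad_dot_edgeNormal (hlamP 2), hP2t, hP2s, hEdgeT]; ring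

/-- Continuity of the normal component of the piecewise BDM basis fields
across the shared edge E_ℓ = [z_s, z_t]: the traces from K⁻ and K⁺ agree and
equal λ_s/|E_ℓ| (for φ_{ℓ,1}) resp. λ_t/|E_ℓ| (for φ_{ℓ,2}). -/
theorem bdm_normal_trace_continuity
    (zrm zrp zs zt : ℝ × ℝ)
    (areaM areaP : ℝ)
    (hareaM : areaM = ((zs.1 - zrm.1) * (zt.2 - zrm.2)
        - (zt.1 - zrm.1) * (zs.2 - zrm.2)) / 2)
    (hccwM : 0 < areaM)
    (hareaP : areaP = ((zt.1 - zrp.1) * (zs.2 - zrp.2)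
        - (zs.1 - zrp.1) * (zt.2 - zrp.2)) / 2)
    (hccwP : 0 < areaP)
    (am bm cm : Fin 3 → ℝ) (lamM : Fin 3 → ℝ × ℝ → ℝ)
    (hlamM : ∀ i p, lamM i p = am i * p.1 + bm i * p.2 + cm i)
    (hinterpM : ∀ i j, lamM i (![zrm, zs, zt] j) = if i = j then 1 else 0)
    (ap bp cp : Fin 3 → ℝ) (lamP : Fin 3 → ℝ × ℝ → ℝ)
    (hlamP : ∀ i p, lamP i p = ap i * p.1 + bp i * p.2 + cp i)
    (hinterpP : ∀ i j, lamP i (![zrp, zt, zs] j) = if i = j then 1 else 0)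
    (phi1M phi2M phi1P phi2P : ℝ × ℝ → ℝ × ℝ)
    (hphi1M : ∀ p, phi1M p = lamM 1 p • ((bm 2, -(am 2)) : ℝ × ℝ))
    (hphi2M : ∀ p, phi2M p = -(lamM 2 p) • ((bm 1, -(am 1)) : ℝ × ℝ))
    (hphi1P : ∀ p, phi1P p = lamP 2 p • ((bp 1, -(ap 1)) : ℝ × ℝ))
    (hphi2P : ∀ p, phi2P p = -(lamP 1 p) • ((bp 2, -(ap 2)) : ℝ × ℝ))
    (lenE : ℝ) (hlen : lenE = ‖zt - zs‖)
    (nE : ℝ × ℝ)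
    (hn : nE = (1 / lenE) • ((zt.2 - zs.2, zs.1 - zt.1) : ℝ × ℝ)) :
    ∀ p ∈ segment ℝ zs zt,
      -- the barycentric traces agree on the edge
      lamM 1 p = lamP 2 p ∧ lamM 2 p = lamP 1 p ∧
      -- traces of the normal component of φ_{ℓ,1} from both sides
      (phi1M p).1 * nE.1 + (phi1M p).2 * nE.2 = lamM 1 p / lenE ∧
      (phi1P p).1 * nE.1 + (phi1P p).2 * nE.2 = lamM 1 p / lenE ∧
      -- traces of the normal component of φ_{ℓ,2} from both sides
      (phi2M p).1 * nE.1 + (phi2M p).2 * nE.2 = lamM 2 p / lenE ∧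
      (phi2P p).1 * nE.1 + (phi2P p).2 * nE.2 = lamM 2 p / lenE :=
  bdm_normal_trace_continuity_general zrm zrp zs zt am bm cm lamM hlamM hinterpM ap bp cp lamP hlamP
    hinterpP phi1M phi2M phi1P phi2P hphi1M hphi2M hphi1P hphi2P lenE nE hn
end
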